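/- arXiv:1808.00372 — 3 statements merged into one kernel-verified Lean document; each statement's English description precedes it below -/
import Mathlib

section
/- For any pair of nodes i and j in a simple connected graph G with m edges, 2m·r_{ij} = T_{ij} + T_{ji}, where T_{ij} is the expected hitting time of the simple random walk from i to j and r_{ij} is the effective resistance between i and j. -/
open Finset

variable {V : Type*}

/-- Normalized adjacency matrix `P = D^{-1/2} A D^{-1/2}`. -/
noncomputable def normAdj [Fintype V] (G : SimpleGraph V) [DecidableRel G.Adj] :
    Matrix V V ℝ :=
  Matrix.of fun i j =>
    if G.Adj i j then 1 / Real.sqrt ((G.degree i : ℝ) * (G.degree j : ℝ)) else 0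

lemma normAdj_isHermitian [Fintype V] (G : SimpleGraph V) [DecidableRel G.Adj] :
    (normAdj G).IsHermitian := by
  ext i j
  simp only [Matrix.conjTranspose_apply, normAdj, Matrix.of_apply, star_trivial]
  by_cases h : G.Adj i j
  · rw [if_pos h, if_pos ((G.adj_comm i j).mp h), mul_comm]
  · rw [if_neg h, if_neg (fun h' => h ((G.adj_comm j i).mp h'))]

/-- `μ` is an eigenvalue of `M`. -/
def IsEigenvalue {W : Type*} [Fintype W] (M : Matrix W W ℝ) (μ : ℝ) : Prop :=
  ∃ v : W → ℝ, v ≠ 0 ∧ M.mulVec v = μ • v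

/-- Multiplicity of `μ` as an eigenvalue of `M` (dimension of the eigenspace). -/
noncomputable def eigMult {W : Type*} [Fintype W] [DecidableEq W]
    (M : Matrix W W ℝ) (μ : ℝ) : ℕ :=
  Module.finrank ℝ (LinearMap.ker (Matrix.toLin' (M - μ • (1 : Matrix W W ℝ))))

/-- `r` is the effective-resistance function of `G`: `r i j = φ i - φ j` where
`L φ = e_i - e_j`. -/
def IsEffRes [Fintype V] [DecidableEq V] (G : SimpleGraph V) [DecidableRel G.Adj]
    (r : V → V → ℝ) : Prop :=
  ∀ i j : V, ∃ φ : V → ℝ,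
    (G.lapMatrix ℝ).mulVec φ =
      (fun k => (if k = i then (1 : ℝ) else 0) - (if k = j then (1 : ℝ) else 0)) ∧
    r i j = φ i - φ j

/-- `T` is the expected-hitting-time function of the simple random walk on `G`. -/
def IsHitting [Fintype V] (G : SimpleGraph V) [DecidableRel G.Adj] (T : V → V → ℝ) : Prop :=
  (∀ j, T j j = 0) ∧
  ∀ i j : V, i ≠ j → T i j = 1 + (∑ k ∈ G.neighborFinset i, T k j) / (G.degree i : ℝ)

/-- Kemeny constant `∑_{λ eigenvalue ≠ 1} 1/(1-λ)` of the random walk on `G`. -/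
noncomputable def kemeny [Fintype V] [DecidableEq V] (G : SimpleGraph V) [DecidableRel G.Adj]
    (hP : (normAdj G).IsHermitian) : ℝ :=
  ∑ i, if hP.eigenvalues i = 1 then 0 else 1 / (1 - hP.eigenvalues i)

/-- Kirchhoff index. -/
noncomputable def kirchhoff [Fintype V] (r : V → V → ℝ) : ℝ :=
  (∑ i, ∑ j, r i j) / 2

/-- Additive degree-Kirchhoff index. -/
noncomputable def addKirchhoff [Fintype V] (G : SimpleGraph V) [DecidableRel G.Adj]
    (r : V → V → ℝ) : ℝ :=
  (∑ i, ∑ j, ((G.degree i : ℝ) + (G.degree j : ℝ)) * r i j) / 2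

/-- Multiplicative degree-Kirchhoff index. -/
noncomputable def mulKirchhoff [Fintype V] (G : SimpleGraph V) [DecidableRel G.Adj]
    (r : V → V → ℝ) : ℝ :=
  (∑ i, ∑ j, (G.degree i : ℝ) * (G.degree j : ℝ) * r i j) / 2

/-- The adjacency relation of the q-subdivision graph. -/
def qSubAdj (G : SimpleGraph V) (q : ℕ) :
    (V ⊕ (G.edgeSet × Fin q)) → (V ⊕ (G.edgeSet × Fin q)) → Prop
  | Sum.inl u, Sum.inr p => u ∈ (p.1 : Sym2 V)
  | Sum.inr p, Sum.inl u => u ∈ (p.1 : Sym2 V)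
  | _, _ => False

/-- The q-subdivision graph `S_q(G)`: every edge `uv` of `G` is replaced by `q`
disjoint paths of length 2. -/
def qSubdivision (G : SimpleGraph V) (q : ℕ) :
    SimpleGraph (V ⊕ (G.edgeSet × Fin q)) where
  Adj := qSubAdj G q
  symm := by
    constructor
    intro a b h
    cases a <;> cases b <;> simp_all [qSubAdj]
  loopless := by
    constructor
    intro a h
    cases a <;> simp_all [qSubAdj]

noncomputable instance (G : SimpleGraph V) (q : ℕ) :
    DecidableRel (qSubdivision G q).Adj := Classical.decRel _

noncomputable instance [Fintype V] (G : SimpleGraph V) : Fintype G.edgeSet :=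
  Fintype.ofFinite _


/-!
Both `k ↦ T k j` and `k ↦ T k i` solve a Laplace equation, `L (T · j) = d - 2m e_j` with `d` the
degree vector: the recurrence for hitting times gives `(L (T · j)) k = d k` for `k ≠ j`, and the
value at `j` is forced because `L` has zero column sums. Hence
`L (T · j - T · i) = 2m (e_i - e_j) = L (2m φ)`, and on a connected graph two functions with the
same Laplacian differ by a constant. Comparing that constant at `i` and at `j` gives the identity.
-/

open Matrix

namespace SimpleGraph

variable [Fintype V] [DecidableEq V] {G : SimpleGraph V} [DecidableRel G.Adj]

theorem sum_lapMatrix_mulVec {R : Type*} [CommRing R] (x : V → R) :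
    ∑ k, (G.lapMatrix R *ᵥ x) k = 0 := by
  have hsum : ∑ k, (G.lapMatrix R *ᵥ x) k = (fun _ ↦ 1) ⬝ᵥ (G.lapMatrix R *ᵥ x) := by
    simp [dotProduct]
  rw [hsum, dotProduct_mulVec, ← mulVec_transpose, (G.isSymm_lapMatrix R).eq,
    lapMatrix_mulVec_const_eq_zero, zero_dotProduct]

theorem Connected.sub_eq_sub_of_lapMatrix_mulVec_eq (hconn : G.Connected) {x y : V → ℝ}
    (hxy : G.lapMatrix ℝ *ᵥ x = G.lapMatrix ℝ *ᵥ y) (i j : V) :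
    x i - y i = x j - y j :=
  (lapMatrix_mulVec_eq_zero_iff_forall_reachable G (x := x - y)).mp
    (by rw [mulVec_sub, hxy, sub_self]) i j (hconn.preconnected i j)

end SimpleGraph

namespace IsHitting

open SimpleGraph

variable [Fintype V] [DecidableEq V] {G : SimpleGraph V} [DecidableRel G.Adj] {T : V → V → ℝ}

theorem lapMatrix_mulVec_apply_of_ne (hT : IsHitting G T) {j k : V} (hkj : k ≠ j)
    (hk : G.degree k ≠ 0) :
    (G.lapMatrix ℝ *ᵥ fun v ↦ T v j) k = G.degree k := by
  have hk' : (G.degree k : ℝ) ≠ 0 := Nat.cast_ne_zero.mpr hk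
  rw [lapMatrix_mulVec_apply, hT.2 k j hkj]
  field_simp
  ring

theorem lapMatrix_mulVec (hT : IsHitting G T) (j : V) (hdeg : ∀ k ≠ j, G.degree k ≠ 0) :
    G.lapMatrix ℝ *ᵥ (fun v ↦ T v j) =
      fun k ↦ G.degree k - if k = j then 2 * (#G.edgeFinset : ℝ) else 0 := by
  ext k
  by_cases hkj : k = j
  · subst hkj
    have hsum := sum_lapMatrix_mulVec (G := G) fun v ↦ T v k
    have hdegsum : ∑ v, (G.degree v : ℝ) = 2 * #G.edgeFinset := by
      -- `convert` bridges the `Fintype G.edgeSet` instance of the definitions and Mathlib's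
      have : ∑ v, G.degree v = 2 * #G.edgeFinset := by
        convert G.sum_degrees_eq_twice_card_edges using 4
      exact_mod_cast this
    rw [← add_sum_erase _ _ (mem_univ k), sum_congr rfl fun v hv ↦
      hT.lapMatrix_mulVec_apply_of_ne (ne_of_mem_erase hv) (hdeg v (ne_of_mem_erase hv))] at hsum
    rw [← add_sum_erase _ _ (mem_univ k)] at hdegsum
    rw [if_pos rfl]
    linarith
  · rw [hT.lapMatrix_mulVec_apply_of_ne hkj (hdeg k hkj), if_neg hkj, sub_zero]

end IsHitting

/-- `2m r_{ij} = T_{ij} + T_{ji}`. -/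
theorem stmt4 [Fintype V] [DecidableEq V] (G : SimpleGraph V) [DecidableRel G.Adj]
    (hconn : G.Connected) (r : V → V → ℝ) (T : V → V → ℝ)
    (hr : IsEffRes G r) (hT : IsHitting G T) (i j : V) :
    2 * (G.edgeFinset.card : ℝ) * r i j = T i j + T j i := by
  obtain ⟨φ, hφ, hrij⟩ := hr i j
  rw [hrij]
  by_cases hij : i = j
  · subst hij
    rw [sub_self, mul_zero, hT.1 i, add_zero]
  have : Nontrivial V := nontrivial_of_ne i j hij
  have hdeg (l : V) : ∀ k ≠ l, G.degree k ≠ 0 :=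
    fun k _ ↦ (hconn.preconnected.degree_pos_of_nontrivial k).ne'
  have hL : G.lapMatrix ℝ *ᵥ ((2 * (#G.edgeFinset : ℝ)) • φ) =
      G.lapMatrix ℝ *ᵥ ((fun v ↦ T v j) - fun v ↦ T v i) := by
    rw [mulVec_smul, mulVec_sub, hφ, hT.lapMatrix_mulVec j (hdeg j),
      hT.lapMatrix_mulVec i (hdeg i)]
    ext k
    simp only [Pi.smul_apply, Pi.sub_apply, smul_eq_mul]
    split_ifs <;> ring
  have hconst := hconn.sub_eq_sub_of_lapMatrix_mulVec_eq hL i j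
  simp only [Pi.smul_apply, Pi.sub_apply, smul_eq_mul, hT.1] at hconst
  linarith
end

section
/- Let G be a simple connected non-bipartite graph with n nodes and m edges, and S_q(G) its q-subdivision graph. Then 0 is an eigenvalue of the normalized adjacency matrix of S_q(G) with multiplicity exactly mq - n. -/
open Finset

variable {V : Type*}

/-! Order the vertices of `S_q(G)` as `V ⊕ (E × Fin q)`. No edge joins two vertices of the same
part, so the normalized adjacency matrix is `[[0, B], [Bᵀ, 0]]` and its kernel is
`ker Bᵀ × ker B`. After rescaling by `√deg`, `Bᵀ x = 0` says that `x / √deg` sums to zero along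
every edge of `G`; on a connected non-bipartite graph such a vector vanishes (its absolute value
is constant, and its sign would be a 2-colouring). So `Bᵀ` is injective, `B` has rank `n`, and
the kernel has dimension `mq - n`. -/

open Matrix

namespace Matrix

variable {K l m : Type*} [Field K] [Fintype l] [Fintype m] [DecidableEq m]

theorem finrank_ker_toLin'_fromBlocks_zero_of_injective [DecidableEq l] (B : Matrix l m K)
    (C : Matrix m l K) (hC : Function.Injective C.mulVec) :
    Module.finrank K (LinearMap.ker (toLin' (fromBlocks 0 B C 0))) =
      Module.finrank K (LinearMap.ker (toLin' B)) := by
  let ι : (m → K) →ₗ[K] (l ⊕ m → K) :=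
    (LinearEquiv.sumArrowLequivProdArrow l m K K).symm.toLinearMap ∘ₗ LinearMap.inr K _ _
  have hι : Function.Injective ι := fun y y' h => congrArg (· ∘ Sum.inr) h
  have hker :
      LinearMap.ker (toLin' (fromBlocks 0 B C 0)) = (LinearMap.ker (toLin' B)).map ι := by
    ext v
    simp only [LinearMap.mem_ker, toLin'_apply, fromBlocks_mulVec, zero_mulVec, zero_add,
      add_zero, Submodule.mem_map]
    rw [← Sum.elim_zero_zero, Sum.elim_eq_iff]
    constructor
    · rintro ⟨hB, hC0⟩
      have hv : v ∘ Sum.inl = 0 := hC (by rw [hC0, mulVec_zero])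
      refine ⟨v ∘ Sum.inr, hB, ?_⟩
      ext (i | j)
      · exact (congrFun hv i).symm
      · rfl
    · rintro ⟨y, hy, rfl⟩
      exact ⟨hy, mulVec_zero C⟩
  rw [hker, (Submodule.equivMapOfInjective ι hι _).finrank_eq]

theorem finrank_ker_toLin'_add_card_of_injective_transpose (B : Matrix l m K)
    (hB : Function.Injective Bᵀ.mulVec) :
    Module.finrank K (LinearMap.ker (toLin' B)) + Fintype.card l = Fintype.card m := by
  have hrank : Module.finrank K (LinearMap.range (toLin' B)) = Fintype.card l := by
    change B.rank = _
    rw [← rank_transpose, rank, LinearMap.finrank_range_of_inj hB,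
      Module.finrank_fintype_fun_eq_card]
  rw [← hrank, add_comm, LinearMap.finrank_range_add_finrank_ker,
    Module.finrank_fintype_fun_eq_card]

end Matrix

namespace SimpleGraph

variable {G : SimpleGraph V}

theorem Reachable.eq_of_forall_adj {β : Type*} {f : V → β}
    (hf : ∀ u v, G.Adj u v → f u = f v) {u v : V} (h : G.Reachable u v) : f u = f v := by
  obtain ⟨w⟩ := h
  induction w with
  | nil => rfl
  | cons hadj _ ih => exact (hf _ _ hadj).trans ih

theorem nontrivial_of_not_colorable_two (hG : ¬ G.Colorable 2) : Nontrivial V := by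
  by_contra h
  rw [not_nontrivial_iff_subsingleton] at h
  exact hG ((colorable_one_iff.mpr (Subsingleton.elim _ _)).mono one_le_two)

theorem eq_zero_of_forall_adj_add_eq_zero {α : Type*} [AddCommGroup α] [LinearOrder α]
    [IsOrderedAddMonoid α] (hconn : G.Connected) (hG : ¬ G.Colorable 2) {z : V → α}
    (hz : ∀ u v, G.Adj u v → z u + z v = 0) : z = 0 := by
  have habs : ∀ u v, |z u| = |z v| := fun u v =>
    (hconn u v).eq_of_forall_adj (f := fun v => |z v|) fun a b hab => by
    rw [eq_neg_of_add_eq_zero_left (hz a b hab), abs_neg]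
  by_contra hne
  obtain ⟨u₀, hu₀⟩ := Function.ne_iff.mp hne
  have hz0 : ∀ v, z v ≠ 0 := fun v hv =>
    hu₀ (abs_eq_zero.mp ((habs u₀ v).trans (by rw [hv, abs_zero])))
  -- the sign of `z` is a proper 2-colouring
  refine hG ⟨Coloring.mk (fun v => if 0 < z v then 0 else 1) fun {a b} hab hcol => ?_⟩
  have hsum := hz a b hab
  split_ifs at hcol with ha hb hb
  · exact (add_pos ha hb).ne' hsum
  · exact absurd hcol (by decide)
  · exact absurd hcol (by decide)
  · exact (add_neg_of_neg_of_nonpos ((not_lt.mp ha).lt_of_ne (hz0 a)) (not_lt.mp hb)).ne hsum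

end SimpleGraph

open SimpleGraph

theorem normAdj_apply {W : Type*} [Fintype W] (H : SimpleGraph W) [DecidableRel H.Adj]
    (i j : W) :
    normAdj H i j =
      if H.Adj i j then (√(H.degree i : ℝ))⁻¹ * (√(H.degree j : ℝ))⁻¹ else 0 := by
  simp [normAdj, Real.sqrt_mul (Nat.cast_nonneg _), mul_comm]

theorem normAdj_eq_fromBlocks {α β : Type*} [Fintype α] [Fintype β] (H : SimpleGraph (α ⊕ β))
    [DecidableRel H.Adj] (hα : ∀ a a', ¬ H.Adj (Sum.inl a) (Sum.inl a'))
    (hβ : ∀ b b', ¬ H.Adj (Sum.inr b) (Sum.inr b')) :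
    normAdj H = fromBlocks 0 (normAdj H).toBlocks₁₂ (normAdj H).toBlocks₁₂ᵀ 0 := by
  conv_lhs => rw [← fromBlocks_toBlocks (normAdj H)]
  congr 1
  · ext a a'
    simp [toBlocks₁₁, normAdj_apply, hα]
  · ext b a
    simpa [toBlocks₂₁, toBlocks₁₂] using (normAdj_isHermitian H).apply (Sum.inl a) (Sum.inr b)
  · ext b b'
    simp [toBlocks₂₂, normAdj_apply, hβ]

theorem qSubdivision_adj_inl_inr (G : SimpleGraph V) (q : ℕ) {u : V}
    {p : G.edgeSet × Fin q} :
    (qSubdivision G q).Adj (Sum.inl u) (Sum.inr p) ↔ u ∈ (p.1 : Sym2 V) := Iff.rfl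

section qSubdivision

variable [Fintype V] [DecidableEq V] (G : SimpleGraph V) (q : ℕ)

theorem transpose_toBlocks₁₂_normAdj_qSubdivision_mulVec_apply (x : V → ℝ) {a b : V}
    (hab : G.Adj a b) (i : Fin q) :
    ((normAdj (qSubdivision G q)).toBlocks₁₂ᵀ *ᵥ x) (⟨s(a, b), hab⟩, i) =
      (√((qSubdivision G q).degree (Sum.inr (⟨s(a, b), hab⟩, i)) : ℝ))⁻¹ *
        ((√((qSubdivision G q).degree (Sum.inl a) : ℝ))⁻¹ * x a +
          (√((qSubdivision G q).degree (Sum.inl b) : ℝ))⁻¹ * x b) := by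
  simp only [mulVec, dotProduct, transpose_apply, toBlocks₁₂, of_apply, normAdj_apply,
    qSubdivision_adj_inl_inr]
  rw [Fintype.sum_eq_add a b hab.ne fun u hu => by simp [Sym2.mem_iff, hu]]
  simp only [Sym2.mem_mk_left, Sym2.mem_mk_right, if_true]
  ring

variable {G q}

theorem injective_mulVec_transpose_toBlocks₁₂_normAdj_qSubdivision (hconn : G.Connected)
    (hG : ¬ G.Colorable 2) (hq : 0 < q) :
    Function.Injective (normAdj (qSubdivision G q)).toBlocks₁₂ᵀ.mulVec := by
  have := nontrivial_of_not_colorable_two hG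
  have hd : ∀ w w', (qSubdivision G q).Adj w w' →
      0 < √((qSubdivision G q).degree w : ℝ) := fun w w' h =>
    Real.sqrt_pos.mpr <| Nat.cast_pos.mpr <|
      (qSubdivision G q).degree_pos_iff_exists_adj w |>.mpr ⟨w', h⟩
  have hdV : ∀ u, 0 < √((qSubdivision G q).degree (Sum.inl u) : ℝ) := fun u => by
    obtain ⟨v, huv⟩ := hconn.preconnected.exists_adj_of_nontrivial u
    exact hd _ (Sum.inr (⟨s(u, v), huv⟩, ⟨0, hq⟩)) (Sym2.mem_mk_left u v)
  refine (injective_iff_map_eq_zero (mulVecLin _)).mpr fun x hx => ?_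
  rw [mulVecLin_apply] at hx
  have hz : (fun u => (√((qSubdivision G q).degree (Sum.inl u) : ℝ))⁻¹ * x u) = 0 :=
    eq_zero_of_forall_adj_add_eq_zero hconn hG fun a b hab => by
      have hp := congrFun hx (⟨s(a, b), hab⟩, ⟨0, hq⟩)
      rw [transpose_toBlocks₁₂_normAdj_qSubdivision_mulVec_apply] at hp
      have hab' : (qSubdivision G q).Adj (Sum.inl a) (Sum.inr (⟨s(a, b), hab⟩, ⟨0, hq⟩)) :=
        Sym2.mem_mk_left a b
      exact (mul_eq_zero.mp hp).resolve_left (inv_ne_zero (hd _ _ hab'.symm).ne')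
  funext u
  simpa [(hdV u).ne'] using congrFun hz u

end qSubdivision

theorem stmt8_general [Fintype V] [DecidableEq V] (G : SimpleGraph V)
    (hconn : G.Connected) (hnb : ¬ G.Colorable 2) (q : ℕ) (hq : 0 < q) :
    eigMult (normAdj (qSubdivision G q)) 0 + Fintype.card V = G.edgeFinset.card * q := by
  have hB := injective_mulVec_transpose_toBlocks₁₂_normAdj_qSubdivision hconn hnb hq
  have hker := finrank_ker_toLin'_add_card_of_injective_transpose _ hB
  rw [Fintype.card_prod, Fintype.card_fin, ← edgeFinset_card] at hker
  rw [eigMult, zero_smul, sub_zero,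
    normAdj_eq_fromBlocks (qSubdivision G q) (fun _ _ h => h) (fun _ _ h => h),
    finrank_ker_toLin'_fromBlocks_zero_of_injective _ _ hB, hker]

/-- for non-bipartite `G`, the multiplicity of the eigenvalue 0 of the
normalized adjacency matrix of `S_q(G)` is `mq - n`. -/
theorem stmt8 [Fintype V] [DecidableEq V] (G : SimpleGraph V) [DecidableRel G.Adj]
    (hconn : G.Connected) (hnb : ¬ G.Colorable 2) (q : ℕ) (hq : 0 < q) :
    eigMult (normAdj (qSubdivision G q)) 0 + Fintype.card V = G.edgeFinset.card * q :=
  stmt8_general G hconn hnb q hq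
end

section
/- Let G be a simple connected bipartite graph with n nodes and m edges, and S_q(G) its q-subdivision graph. Then 0 is an eigenvalue of the normalized adjacency matrix of S_q(G) with multiplicity exactly mq - n + 2. -/
/-!
The normalized adjacency matrix of `S_q(G)` has the block form `[[0, B], [Bᵀ, 0]]`, so its
kernel has dimension `dim ker B + dim ker Bᵀ = (mq - n + dim ker Bᵀ) + dim ker Bᵀ`.
A vector `x` on the vertices of `G` lies in `ker Bᵀ` iff `x a / √d a + x b / √d b = 0` along
every edge `ab`; on a connected bipartite graph this forces `x v = c · σ v · √d v`, where
`σ = ±1` is the 2-colouring, so `dim ker Bᵀ = 1`.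
-/

open Finset

variable {V : Type*}

open Matrix LinearMap Module

namespace SimpleGraph

variable {G : SimpleGraph V}

theorem Preconnected.apply_eq_of_forall_adj {α : Type*} (hG : G.Preconnected) {f : V → α}
    (hf : ∀ a b, G.Adj a b → f a = f b) (u v : V) : f u = f v := by
  obtain ⟨p⟩ := hG u v
  induction p with
  | nil => rfl
  | cons h _ ih => exact (hf _ _ h).trans ih

theorem Colorable.exists_sign {R : Type*} [Ring R] (hG : G.Colorable 2) :
    ∃ σ : V → R, (∀ v, σ v ^ 2 = 1) ∧ ∀ a b, G.Adj a b → σ a = -σ b := by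
  obtain ⟨c⟩ := hG
  refine ⟨fun v => if c v = 0 then 1 else -1, fun v => by dsimp only; split_ifs <;> norm_num,
    fun a b h => ?_⟩
  have hab := c.valid h
  dsimp only
  split_ifs <;> grind

variable {K : Type*} [Field K]

variable (G) in
def weightedSignlessKer (w : V → K) : Submodule K (V → K) where
  carrier := {x | ∀ a b, G.Adj a b → w a * x a + w b * x b = 0}
  add_mem' {x y} hx hy a b h := by
    simp only [Pi.add_apply]
    linear_combination hx a b h + hy a b h
  zero_mem' _ _ _ := by simp
  smul_mem' r x hx a b h := by
    simp only [Pi.smul_apply, smul_eq_mul]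
    linear_combination r * hx a b h

theorem mem_weightedSignlessKer {w x : V → K} :
    x ∈ G.weightedSignlessKer w ↔ ∀ a b, G.Adj a b → w a * x a + w b * x b = 0 :=
  Iff.rfl

theorem finrank_weightedSignlessKer (hG : G.Connected) (hb : G.Colorable 2) {w : V → K}
    (hw : ∀ v, w v ≠ 0) : finrank K (G.weightedSignlessKer w) = 1 := by
  obtain ⟨σ, hσ_sq, hσ_adj⟩ := hb.exists_sign (R := K)
  have hσ : ∀ v, σ v ≠ 0 := fun v h => by simpa [h] using hσ_sq v
  obtain ⟨v₀⟩ := hG.nonempty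
  set s : V → K := fun v => σ v / w v
  have hs : s ∈ G.weightedSignlessKer w := fun a b h => by
    simp only [s, hσ_adj a b h]
    field_simp [hw a, hw b]
    ring
  have hs0 : s ≠ 0 := fun h => by
    simpa [s, hσ v₀, hw v₀] using congrFun h v₀
  suffices G.weightedSignlessKer w = K ∙ s by rw [this, finrank_span_singleton hs0]
  refine le_antisymm (fun x hx => ?_) ((Submodule.span_singleton_le_iff_mem _ _).2 hs)
  have hconst := hG.preconnected.apply_eq_of_forall_adj (f := fun v => σ v * w v * x v)
    fun a b h => by linear_combination (-σ b) * hx a b h + w a * x a * hσ_adj a b h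
  refine Submodule.mem_span_singleton.2 ⟨σ v₀ * w v₀ * x v₀, funext fun v => ?_⟩
  simp only [Pi.smul_apply, smul_eq_mul, hconst v₀ v, s]
  field_simp [hw v]
  linear_combination x v * hσ_sq v

end SimpleGraph

namespace Matrix

variable {R K m n : Type*}

theorem IsSymm.eq_fromBlocks_zero {α : Type*} [Zero α] {M : Matrix (m ⊕ n) (m ⊕ n) α}
    (hM : M.IsSymm) (h₁₁ : M.toBlocks₁₁ = 0) (h₂₂ : M.toBlocks₂₂ = 0) :
    M = Matrix.fromBlocks 0 M.toBlocks₁₂ M.toBlocks₁₂ᵀ 0 := by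
  rw [← fromBlocks_toBlocks M, isSymm_fromBlocks_iff] at hM
  conv_lhs => rw [← fromBlocks_toBlocks M, h₁₁, h₂₂, ← hM.2.1]

variable [Fintype m] [Fintype n]

section CommSemiring

variable [CommSemiring R]

theorem fromBlocks_zero_mulVec_eq_zero_iff (B : Matrix m n R) (C : Matrix n m R)
    (v : m ⊕ n → R) :
    fromBlocks 0 B C 0 *ᵥ v = 0 ↔ B *ᵥ (v ∘ Sum.inr) = 0 ∧ C *ᵥ (v ∘ Sum.inl) = 0 := by
  simp [fromBlocks_mulVec, funext_iff, Sum.forall]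

def kerFromBlocksZeroEquiv (B : Matrix m n R) (C : Matrix n m R) :
    ker (fromBlocks 0 B C 0).mulVecLin ≃ₗ[R] ker C.mulVecLin × ker B.mulVecLin where
  toFun v := (⟨v.1 ∘ Sum.inl, ((fromBlocks_zero_mulVec_eq_zero_iff B C v.1).1 v.2).2⟩,
    ⟨v.1 ∘ Sum.inr, ((fromBlocks_zero_mulVec_eq_zero_iff B C v.1).1 v.2).1⟩)
  invFun xy := ⟨Sum.elim xy.1 xy.2, (fromBlocks_zero_mulVec_eq_zero_iff B C _).2 ⟨xy.2.2, xy.1.2⟩⟩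
  map_add' _ _ := rfl
  map_smul' _ _ := rfl
  left_inv v := Subtype.ext (Sum.elim_comp_inl_inr v.1)
  right_inv _ := rfl

end CommSemiring

theorem finrank_ker_fromBlocks_zero_transpose [Field K] (B : Matrix m n K) :
    finrank K (ker (fromBlocks 0 B Bᵀ 0).mulVecLin) + Fintype.card m =
      Fintype.card n + 2 * finrank K (ker Bᵀ.mulVecLin) := by
  have hB := finrank_range_add_finrank_ker B.mulVecLin
  have hBt := finrank_range_add_finrank_ker Bᵀ.mulVecLin
  have hrank : finrank K (range Bᵀ.mulVecLin) = finrank K (range B.mulVecLin) :=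
    rank_transpose B
  rw [finrank_fintype_fun_eq_card] at hB hBt
  rw [(kerFromBlocksZeroEquiv B Bᵀ).finrank_eq, finrank_prod]
  omega

end Matrix

theorem eigMult_zero {W : Type*} [Fintype W] [DecidableEq W] (M : Matrix W W ℝ) :
    eigMult M 0 = finrank ℝ (ker M.mulVecLin) := by
  rw [eigMult, zero_smul, sub_zero, toLin'_apply']

section Subdivision

variable [Fintype V] (G : SimpleGraph V) (q : ℕ)

noncomputable def qSubdivisionBlock : Matrix V (G.edgeSet × Fin q) ℝ :=
  (normAdj (qSubdivision G q)).toBlocks₁₂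

theorem normAdj_qSubdivision :
    normAdj (qSubdivision G q) =
      fromBlocks 0 (qSubdivisionBlock G q) (qSubdivisionBlock G q)ᵀ 0 := by
  have hsymm := isHermitian_iff_isSymm.1 (normAdj_isHermitian (qSubdivision G q))
  refine hsymm.eq_fromBlocks_zero ?_ ?_ <;>
  · ext i j
    exact if_neg id

theorem qSubdivisionBlock_transpose_mulVec (x : V → ℝ) {a b : V} (h : G.Adj a b) (k : Fin q) :
    ((qSubdivisionBlock G q)ᵀ *ᵥ x) (⟨s(a, b), G.mem_edgeSet.2 h⟩, k) =
      (√((qSubdivision G q).degree (.inr (⟨s(a, b), G.mem_edgeSet.2 h⟩, k))))⁻¹ *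
        ((√((qSubdivision G q).degree (.inl a)))⁻¹ * x a +
          (√((qSubdivision G q).degree (.inl b)))⁻¹ * x b) := by
  have hadj (u : V) :
      (qSubdivision G q).Adj (.inl u) (.inr (⟨s(a, b), G.mem_edgeSet.2 h⟩, k)) ↔ u = a ∨ u = b :=
    Sym2.mem_iff
  simp only [mulVec, dotProduct, transpose_apply, qSubdivisionBlock, toBlocks₁₂, of_apply,
    normAdj]
  rw [Fintype.sum_eq_add a b h.ne fun u hu => by
      rw [if_neg ((hadj u).not.2 (not_or.2 hu)), zero_mul],
    if_pos ((hadj a).2 (.inl rfl)), if_pos ((hadj b).2 (.inr rfl))]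
  simp only [Nat.cast_nonneg, Real.sqrt_mul, one_div, mul_inv]
  ring

theorem ker_qSubdivisionBlock_transpose (hq : 0 < q) :
    ker (qSubdivisionBlock G q)ᵀ.mulVecLin =
      G.weightedSignlessKer fun u => (√((qSubdivision G q).degree (.inl u)))⁻¹ := by
  ext x
  rw [mem_ker, mulVecLin_apply, SimpleGraph.mem_weightedSignlessKer, funext_iff]
  constructor
  · intro hx a b h
    have hdeg : 0 < (qSubdivision G q).degree (.inr (⟨s(a, b), G.mem_edgeSet.2 h⟩, ⟨0, hq⟩)) :=
      SimpleGraph.Adj.degree_pos_left (G := qSubdivision G q) (w := .inl a) (Sym2.mem_mk_left a b)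
    have := hx (⟨s(a, b), G.mem_edgeSet.2 h⟩, ⟨0, hq⟩)
    rw [qSubdivisionBlock_transpose_mulVec G q x h] at this
    exact (mul_eq_zero.1 this).resolve_left (by positivity)
  · rintro hx ⟨⟨e, he⟩, k⟩
    induction e using Sym2.ind with
    | _ a b => rw [qSubdivisionBlock_transpose_mulVec G q x he, hx a b he, mul_zero, Pi.zero_apply]

theorem finrank_ker_qSubdivisionBlock_transpose (hconn : G.Connected) (hb : G.Colorable 2)
    (hq : 0 < q) : finrank ℝ (ker (qSubdivisionBlock G q)ᵀ.mulVecLin) = 1 := by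
  rw [ker_qSubdivisionBlock_transpose G q hq]
  rcases subsingleton_or_nontrivial V with hV | hV
  · have htop (w : V → ℝ) : G.weightedSignlessKer w = ⊤ := eq_top_iff.2 fun _ _ a b h =>
      (h.ne (Subsingleton.elim a b)).elim
    obtain ⟨v₀⟩ := hconn.nonempty
    rw [htop, finrank_top, finrank_fintype_fun_eq_card,
      Fintype.card_eq_one_iff.2 ⟨v₀, fun _ => Subsingleton.elim _ _⟩]
  · refine SimpleGraph.finrank_weightedSignlessKer hconn hb fun u => ?_
    obtain ⟨v, hv⟩ := exists_ne u
    obtain ⟨w, huw⟩ := (hconn u v).nonempty_neighborSet_left hv.symm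
    have hdeg : 0 < (qSubdivision G q).degree (.inl u) :=
      SimpleGraph.Adj.degree_pos_left (G := qSubdivision G q)
        (w := .inr (⟨s(u, w), G.mem_edgeSet.2 huw⟩, ⟨0, hq⟩)) (Sym2.mem_mk_left u w)
    positivity

end Subdivision

theorem stmt9_general [Fintype V] [DecidableEq V] (G : SimpleGraph V)
    (hconn : G.Connected) (hb : G.Colorable 2) (q : ℕ) (hq : 0 < q) :
    eigMult (normAdj (qSubdivision G q)) 0 + Fintype.card V = G.edgeFinset.card * q + 2 := by
  have hcount := finrank_ker_fromBlocks_zero_transpose (qSubdivisionBlock G q)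
  rw [finrank_ker_qSubdivisionBlock_transpose G q hconn hb hq, Fintype.card_prod, Fintype.card_fin,
    ← normAdj_qSubdivision, ← eigMult_zero] at hcount
  rw [hcount, SimpleGraph.edgeFinset, Set.toFinset_card]

/-- for bipartite `G`, the multiplicity of the eigenvalue 0 of the
normalized adjacency matrix of `S_q(G)` is `mq - n + 2`. -/
theorem stmt9 [Fintype V] [DecidableEq V] (G : SimpleGraph V) [DecidableRel G.Adj]
    (hconn : G.Connected) (hb : G.Colorable 2) (q : ℕ) (hq : 0 < q) :
    eigMult (normAdj (qSubdivision G q)) 0 + Fintype.card V = G.edgeFinset.card * q + 2 :=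
  stmt9_general G hconn hb q hq
end
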